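/- (G₂ sequence.) On ℝ⁴ (d = 4, no dilatons) consider the four wall forms w_{−1} = e₄ − e₃, w₀ = e₃ − e₂, w₁ = e₂ − e₁ (symmetry walls) and w₂ = e₁ (electric wall of the 1-form). Then (w_{−1}|w_{−1}) = (w₀|w₀) = (w₁|w₁) = 2 and (w₂|w₂) = 2/3, and the Cartan matrix A_{ij} = 2(w_i|w_j)/(w_i|w_i) equals the 4×4 matrix with rows (2,−1,0,0), (−1,2,−1,0), (0,−1,2,−1), (0,0,−3,2) in the ordering (w_{−1}, w₀, w₁, w₂). This is the generalized Cartan matrix of the hyperbolic overextension G₂^∧∧. -/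

import Mathlib

/-- The wall scalar product on `ℝ^d` (no dilatons):
`(w|w') = Σᵢ wᵢw'ᵢ − (1/(d−1)) (Σᵢ wᵢ)(Σᵢ w'ᵢ)`. -/
noncomputable def wallIP (d : ℕ) (w w' : Fin d → ℝ) : ℝ :=
  (∑ i, w i * w' i) - (1 / ((d : ℝ) - 1)) * (∑ i, w i) * (∑ i, w' i)

/-! The wall product is bilinear with `(eᵢ|eⱼ) = δᵢⱼ − 1/(d−1)`, which determines the Gram matrix
of the four walls entry by entry; the Cartan matrix is that Gram matrix with each row divided by
half its diagonal entry, so only the electric wall `e₁` (of norm `2/3`) has its row tripled. -/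

section WallIP

variable {d : ℕ}

theorem wallIP_sub_left (u v w : Fin d → ℝ) :
    wallIP d (u - v) w = wallIP d u w - wallIP d v w := by
  simp only [wallIP, Pi.sub_apply, sub_mul, Finset.sum_sub_distrib]
  ring

theorem wallIP_sub_right (u v w : Fin d → ℝ) :
    wallIP d u (v - w) = wallIP d u v - wallIP d u w := by
  simp only [wallIP, Pi.sub_apply, mul_sub, Finset.sum_sub_distrib]
  ring

theorem wallIP_single_single (i j : Fin d) :
    wallIP d (Pi.single i 1) (Pi.single j 1) =
      (if i = j then 1 else 0) - 1 / ((d : ℝ) - 1) := by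
  simp [wallIP, Pi.single_apply, eq_comm]

end WallIP

noncomputable def g2Walls : Fin 4 → Fin 4 → ℝ :=
  ![Pi.single 3 1 - Pi.single 2 1, Pi.single 2 1 - Pi.single 1 1,
    Pi.single 1 1 - Pi.single 0 1, Pi.single 0 1]

/-- The symmetrised Cartan matrix of `G₂^∧∧`. -/
noncomputable def g2WallGram : Matrix (Fin 4) (Fin 4) ℝ :=
  !![2, -1, 0, 0;
     -1, 2, -1, 0;
     0, -1, 2, -1;
     0, 0, -1, 2 / 3]

theorem wallIP_g2Walls (i j : Fin 4) :
    wallIP 4 (g2Walls i) (g2Walls j) = g2WallGram i j := by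
  fin_cases i <;> fin_cases j <;>
    norm_num [g2Walls, g2WallGram, wallIP_sub_left, wallIP_sub_right, wallIP_single_single,
      Fin.ext_iff]

theorem G2_billiard (w : Fin 4 → Fin 4 → ℝ)
    (hw0 : w 0 = fun l => (if l.val = 3 then (1 : ℝ) else 0)
      - (if l.val = 2 then 1 else 0))
    (hw1 : w 1 = fun l => (if l.val = 2 then (1 : ℝ) else 0)
      - (if l.val = 1 then 1 else 0))
    (hw2 : w 2 = fun l => (if l.val = 1 then (1 : ℝ) else 0)
      - (if l.val = 0 then 1 else 0))
    (hw3 : w 3 = fun l => if l.val = 0 then (1 : ℝ) else 0)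
    (A : Fin 4 → Fin 4 → ℝ)
    (hA : ∀ i j, A i j = 2 * wallIP 4 (w i) (w j) / wallIP 4 (w i) (w i)) :
    wallIP 4 (w 0) (w 0) = 2 ∧ wallIP 4 (w 1) (w 1) = 2 ∧
    wallIP 4 (w 2) (w 2) = 2 ∧ wallIP 4 (w 3) (w 3) = 2 / 3 ∧
    (∀ i j, A i j =
      (!![2, -1, 0, 0;
          -1, 2, -1, 0;
          0, -1, 2, -1;
          0, 0, -3, 2] : Matrix (Fin 4) (Fin 4) ℝ) i j) := by
  have hw : w = g2Walls := by
    ext i l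
    fin_cases i <;> fin_cases l <;> simp [hw0, hw1, hw2, hw3, g2Walls]
  have gram : ∀ i j, wallIP 4 (w i) (w j) = g2WallGram i j := hw ▸ wallIP_g2Walls
  refine ⟨gram 0 0, gram 1 1, gram 2 2, gram 3 3, fun i j => ?_⟩
  rw [hA, gram, gram]
  fin_cases i <;> fin_cases j <;> norm_num [g2WallGram]
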